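/- For a prime p ≥ 5 and all k with (tp−1)/3 < k < p, where t ∈ {1,2} is chosen with tp ≡ 1 (mod 3), the rising factorial (1/3)_k has positive p-adic valuation while (1)_k = k! is a p-adic unit; hence each such term (1/3)_k^6/(k!)^6 · (6k+1) is divisible by p^6. -/

import Mathlib

/-!
The factor of `(1/3)_k` with index `i = (tp - 1)/3 < k` is `1/3 + i = tp/3`, which is
divisible by `p` since `tp ≡ 1 (mod 3)` forces `p ≠ 3`; all other factors are `p`-adic
integers. The factorial `k!` with `k < p` is prime to `p`.
-/

lemma ascPochhammer_eval_eq_prod_range {R : Type*} [CommSemiring R] (n : ℕ) (x : R) :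
    (ascPochhammer R n).eval x = ∏ i ∈ Finset.range n, (x + i) := by
  induction n with
  | zero => simp
  | succ n ih =>
    rw [ascPochhammer_succ_right, Finset.prod_range_succ, ← ih]
    simp [Polynomial.eval_mul, Polynomial.eval_add]

lemma norm_ascPochhammer_eval_le_norm_add {K : Type*} [NormedField K] [IsUltrametricDist K]
    {x : K} (hx : ‖x‖ ≤ 1) {i k : ℕ} (hik : i < k) :
    ‖(ascPochhammer K k).eval x‖ ≤ ‖x + i‖ := by
  have hfactor (j : ℕ) : ‖x + j‖ ≤ 1 :=
    (IsUltrametricDist.norm_add_le_max _ _).trans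
      (max_le hx (IsUltrametricDist.norm_natCast_le_one K j))
  rw [ascPochhammer_eval_eq_prod_range, norm_prod,
    ← Finset.prod_erase_mul _ _ (Finset.mem_range.mpr hik)]
  exact mul_le_of_le_one_left (norm_nonneg _)
    (Finset.prod_le_one (fun _ _ => norm_nonneg _) fun j _ => hfactor j)

namespace Padic

variable {p : ℕ} [hp : Fact p.Prime]

lemma norm_natCast_le_inv_of_dvd {n : ℕ} (h : p ∣ n) : ‖(n : ℚ_[p])‖ ≤ (p : ℝ)⁻¹ := by
  obtain ⟨m, rfl⟩ := h
  rw [Nat.cast_mul, norm_mul, norm_p]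
  exact mul_le_of_le_one_right (by positivity) (IsUltrametricDist.norm_natCast_le_one ℚ_[p] m)

lemma norm_factorial_eq_one {k : ℕ} (hk : k < p) : ‖(k.factorial : ℚ_[p])‖ = 1 :=
  norm_natCast_eq_one_iff.mpr (hp.out.coprime_factorial_of_lt hk)

lemma norm_three_eq_one (hp3 : p ≠ 3) : ‖(3 : ℚ_[p])‖ = 1 := by
  exact_mod_cast norm_natCast_eq_one_iff.mpr ((Nat.coprime_primes hp.out Nat.prime_three).mpr hp3)

lemma norm_third_add_le_inv {i : ℕ} (hp3 : p ≠ 3) (hdvd : p ∣ 3 * i + 1) :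
    ‖(1 / 3 : ℚ_[p]) + i‖ ≤ (p : ℝ)⁻¹ := by
  have hthird : (1 / 3 : ℚ_[p]) + i = ((3 * i + 1 : ℕ) : ℚ_[p]) / 3 := by
    push_cast
    field_simp
    ring
  rw [hthird, norm_div, norm_three_eq_one hp3, div_one]
  exact norm_natCast_le_inv_of_dvd hdvd

end Padic

theorem pochhammer_third_tail_general (p : ℕ) [Fact p.Prime]
    (t : ℕ) (ht3 : t * p % 3 = 1)
    (k : ℕ) (hk1 : (t * p - 1) / 3 < k) (hk2 : k ≤ p - 1) :
    ‖(ascPochhammer ℚ_[p] k).eval (1 / 3)‖ ≤ ((p : ℝ))⁻¹ ∧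
      ‖(k.factorial : ℚ_[p])‖ = 1 ∧
      ‖(6 * (k : ℚ_[p]) + 1) * ((ascPochhammer ℚ_[p] k).eval (1 / 3)) ^ 6 /
          ((k.factorial : ℚ_[p])) ^ 6‖ ≤ (p : ℝ) ^ (-6 : ℤ) := by
  have hp3 : p ≠ 3 := by rintro rfl; omega
  have hthird : ‖(1 / 3 : ℚ_[p])‖ ≤ 1 := by
    rw [norm_div, norm_one, Padic.norm_three_eq_one hp3, div_one]
  have hdvd : p ∣ 3 * ((t * p - 1) / 3) + 1 := by
    rw [show 3 * ((t * p - 1) / 3) + 1 = t * p by omega]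
    exact dvd_mul_left p t
  have hpoch : ‖(ascPochhammer ℚ_[p] k).eval (1 / 3)‖ ≤ (p : ℝ)⁻¹ :=
    (norm_ascPochhammer_eval_le_norm_add hthird hk1).trans (Padic.norm_third_add_le_inv hp3 hdvd)
  have hfact : ‖(k.factorial : ℚ_[p])‖ = 1 := Padic.norm_factorial_eq_one (by omega)
  refine ⟨hpoch, hfact, ?_⟩
  have hlin : ‖6 * (k : ℚ_[p]) + 1‖ ≤ 1 := by
    exact_mod_cast IsUltrametricDist.norm_natCast_le_one ℚ_[p] (6 * k + 1)
  rw [norm_div, norm_mul, norm_pow, norm_pow, hfact, one_pow, div_one, zpow_neg, ← inv_zpow,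
    zpow_ofNat]
  exact (mul_le_of_le_one_left (by positivity) hlin).trans
    (pow_le_pow_left₀ (norm_nonneg _) hpoch 6)

/-- For `p ≥ 5` prime, `t ∈ {1,2}` with `tp ≡ 1 (mod 3)` and
`(tp-1)/3 < k ≤ p-1`: `v_p((1/3)_k) ≥ 1`, `v_p(k!) = 0`, and
`v_p((6k+1) (1/3)_k⁶ / (k!)⁶) ≥ 6`. -/
theorem pochhammer_third_tail (p : ℕ) [Fact p.Prime] (hp : 5 ≤ p)
    (t : ℕ) (ht : t = 1 ∨ t = 2) (ht3 : t * p % 3 = 1)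
    (k : ℕ) (hk1 : (t * p - 1) / 3 < k) (hk2 : k ≤ p - 1) :
    ‖(ascPochhammer ℚ_[p] k).eval (1 / 3)‖ ≤ ((p : ℝ))⁻¹ ∧
      ‖(k.factorial : ℚ_[p])‖ = 1 ∧
      ‖(6 * (k : ℚ_[p]) + 1) * ((ascPochhammer ℚ_[p] k).eval (1 / 3)) ^ 6 /
          ((k.factorial : ℚ_[p])) ^ 6‖ ≤ (p : ℝ) ^ (-6 : ℤ) :=
  pochhammer_third_tail_general p t ht3 k hk1 hk2
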